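/- arXiv:1804.01597 — 2 statements merged into one kernel-verified Lean document; each statement's English description precedes it below -/
import Mathlib

section
/- For all integers 0 ≤ k ≤ n, the number of Dyck words of semi-length n+1 having exactly k up-steps not at ground level equals C_{n,k}. -/
/-- Catalan's triangle: `C_{n,k} = ((n-k+1)/(n+1)) * binom(n+k, n)` (the division is exact). -/
def catalanTriangle (n k : ℕ) : ℕ := (n - k + 1) * (n + k).choose n / (n + 1)

/-- A Dyck word of semi-length `m`: a word in `U = true` and `D = false` of length `2m` with
`m` `U`'s and `m` `D`'s such that every prefix has at least as many `U`'s as `D`'s. -/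
def IsDyckWord (m : ℕ) (w : List Bool) : Prop :=
  w.length = 2 * m ∧ w.count true = m ∧ w.count false = m ∧
    ∀ i, (w.take i).count false ≤ (w.take i).count true

/-- The positions of the up-steps of `w` that are not at ground level, i.e. positions `i`
carrying a `U` such that the prefix strictly before position `i` does not have equally many
`U`'s and `D`'s. -/
def upStepsNotAtGround (w : List Bool) : Finset ℕ :=
  (Finset.range w.length).filter fun i =>
    w.getD i false = true ∧ (w.take i).count true ≠ (w.take i).count false

/-! A ballot word is a word in which every prefix has at least as many `U`s as `D`s. In a
Dyck word the ground-level up-steps and the returns to the ground pair up into arches, so the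
up-steps not at ground level are exactly as many as the down-steps that do not return to the
ground. Counting ballot words with `a + 1` up-steps, `d` down-steps and `j` non-returning
down-steps by their last letter yields Pascal's rule for the ballot numbers
`binom(a + j, a) - binom(a + j, a + 1)`, whatever `d` is; for `j ≤ a` these are the entries of
Catalan's triangle. -/

/-- Valued in `ℤ`, so that Pascal's rule `ballotNumber_succ_succ` holds without truncation,
including on the boundary `ballotNumber n (n + 1) = 0`. -/
def ballotNumber (n k : ℕ) : ℤ := (n + k).choose n - (n + k).choose (n + 1)

lemma ballotNumber_zero_right (n : ℕ) : ballotNumber n 0 = 1 := by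
  simp [ballotNumber]

lemma ballotNumber_self_succ (n : ℕ) : ballotNumber n (n + 1) = 0 := by
  have := Nat.choose_symm_half n
  simp only [ballotNumber, show n + (n + 1) = 2 * n + 1 by ring, this, sub_self]

lemma ballotNumber_succ_succ (n k : ℕ) :
    ballotNumber (n + 1) (k + 1) = ballotNumber n (k + 1) + ballotNumber (n + 1) k := by
  simp only [ballotNumber, show n + 1 + (k + 1) = n + (k + 1) + 1 by ring,
    show n + 1 + k = n + (k + 1) by ring, Nat.choose_succ_succ', Nat.cast_add]
  ring

lemma catalanTriangle_eq_ballotNumber {n k : ℕ} (hk : k ≤ n) :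
    (catalanTriangle n k : ℤ) = ballotNumber n k := by
  have hsucc : ((n + k).choose (n + 1) * (n + 1) : ℤ) = (n + k).choose n * k := by
    have := Nat.choose_succ_right_eq (n + k) n
    rw [Nat.add_sub_cancel_left] at this
    exact_mod_cast this
  have hnum : (((n - k + 1) * (n + k).choose n : ℕ) : ℤ) = (n + 1) * ballotNumber n k := by
    rw [ballotNumber]
    push_cast [hk]
    linear_combination hsucc
  rw [catalanTriangle, Int.natCast_div, hnum]
  push_cast
  exact Int.mul_ediv_cancel_left _ (by positivity)

def IsBallotWord (w : List Bool) : Prop :=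
  ∀ i, (w.take i).count false ≤ (w.take i).count true

lemma IsBallotWord.count_false_le {w : List Bool} (h : IsBallotWord w) :
    w.count false ≤ w.count true := by
  simpa using h w.length

lemma IsBallotWord.of_append {s t : List Bool} (h : IsBallotWord (s ++ t)) : IsBallotWord s :=
  fun i => by simpa only [← List.take_take, List.take_left] using h (min i s.length)

lemma isBallotWord_append_singleton {t : List Bool} {b : Bool} :
    IsBallotWord (t ++ [b]) ↔ IsBallotWord t ∧ (b = false → t.count false < t.count true) := by
  refine ⟨fun h => ⟨h.of_append, fun hb => ?_⟩, fun ⟨ht, hb⟩ i => ?_⟩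
  · have := h.count_false_le
    subst hb
    grind
  · rcases le_or_gt i t.length with hi | hi
    · simpa [List.take_append_of_le_length hi] using ht i
    · rw [List.take_of_length_le (by simp; omega)]
      have := ht.count_false_le
      grind

def stepsWhere (p : List Bool → Bool → Prop) [DecidableRel p] (w : List Bool) : Finset ℕ :=
  (Finset.range w.length).filter fun i => p (w.take i) (w.getD i false)

lemma card_stepsWhere_append_singleton (p : List Bool → Bool → Prop) [DecidableRel p]
    (t : List Bool) (b : Bool) :
    (stepsWhere p (t ++ [b])).card = (stepsWhere p t).card + if p t b then 1 else 0 := by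
  have hprefix : ((Finset.range t.length).filter fun i =>
      p ((t ++ [b]).take i) ((t ++ [b]).getD i false)) = stepsWhere p t :=
    Finset.filter_congr fun i hi => by
      rw [Finset.mem_range] at hi
      rw [List.getD_append _ _ _ _ hi, List.take_append_of_le_length hi.le]
  have hlast : (t ++ [b]).getD t.length false = b := by simp
  rw [stepsWhere, List.length_append, List.length_singleton, Finset.range_add_one,
    Finset.filter_insert, List.take_left, hlast, hprefix]
  split_ifs
  · exact Finset.card_insert_of_notMem (by simp [stepsWhere])
  · rfl

def downStepsNotToGround (w : List Bool) : Finset ℕ :=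
  stepsWhere (fun t b => b = false ∧ t.count true ≠ t.count false + 1) w

lemma card_upStepsNotAtGround_append_singleton (t : List Bool) (b : Bool) :
    (upStepsNotAtGround (t ++ [b])).card =
      (upStepsNotAtGround t).card + if b = true ∧ t.count true ≠ t.count false then 1 else 0 :=
  card_stepsWhere_append_singleton (fun t b => b = true ∧ t.count true ≠ t.count false) t b

lemma card_downStepsNotToGround_append_singleton (t : List Bool) (b : Bool) :
    (downStepsNotToGround (t ++ [b])).card = (downStepsNotToGround t).card +
      if b = false ∧ t.count true ≠ t.count false + 1 then 1 else 0 :=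
  card_stepsWhere_append_singleton _ t b

lemma card_downStepsNotToGround_le (w : List Bool) :
    (downStepsNotToGround w).card ≤ w.count false := by
  induction w using List.reverseRecOn with
  | nil => simp [downStepsNotToGround, stepsWhere]
  | append_singleton t b ih =>
    rw [card_downStepsNotToGround_append_singleton, List.count_append]
    grind

/-- Every ground-level up-step opens an arch closed by a return to the ground, except the last
one when `w` ends above the ground. -/
lemma IsBallotWord.card_upStepsNotAtGround_add {w : List Bool} (hw : IsBallotWord w) :
    (upStepsNotAtGround w).card + (if w.count false < w.count true then 1 else 0) +
      w.count false = (downStepsNotToGround w).card + w.count true := by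
  induction w using List.reverseRecOn with
  | nil => simp [upStepsNotAtGround, downStepsNotToGround, stepsWhere]
  | append_singleton t b ih =>
    obtain ⟨ht, hb⟩ := isBallotWord_append_singleton.1 hw
    have := ih ht
    have := ht.count_false_le
    rw [card_upStepsNotAtGround_append_singleton, card_downStepsNotToGround_append_singleton,
      List.count_append, List.count_append]
    grind

lemma IsBallotWord.card_upStepsNotAtGround_eq {w : List Bool} (hw : IsBallotWord w)
    (hbal : w.count true = w.count false) :
    (upStepsNotAtGround w).card = (downStepsNotToGround w).card := by
  have := hw.card_upStepsNotAtGround_add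
  rw [hbal, if_neg (lt_irrefl _)] at this
  omega

def ballotWords (u d j : ℕ) : Set (List Bool) :=
  {w | IsBallotWord w ∧ w.count true = u ∧ w.count false = d ∧ (downStepsNotToGround w).card = j}

lemma ballotWords_finite (u d j : ℕ) : (ballotWords u d j).Finite :=
  (List.finite_length_eq Bool (u + d)).subset fun w ⟨_, hu, hd, _⟩ => by
    simp [← List.count_true_add_count_false, hu, hd]

lemma ballotWords_eq_empty_of_ups_lt {u d : ℕ} (j : ℕ) (h : u < d) : ballotWords u d j = ∅ :=
  Set.eq_empty_of_forall_notMem fun _ ⟨hw, hu, hd, _⟩ => by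
    have := hw.count_false_le
    omega

lemma ballotWords_eq_empty_of_downs_lt (u : ℕ) {d j : ℕ} (h : d < j) : ballotWords u d j = ∅ :=
  Set.eq_empty_of_forall_notMem fun w ⟨_, _, hd, hj⟩ => by
    have := card_downStepsNotToGround_le w
    omega

lemma ballotWords_zero_zero (u : ℕ) : ballotWords u 0 0 = {List.replicate u true} := by
  ext w
  refine ⟨fun ⟨_, hu, hd, _⟩ => ?_, ?_⟩
  · rw [Set.mem_singleton_iff, List.eq_replicate_iff]
    refine ⟨by simp [← List.count_true_add_count_false, hu, hd], fun b hb => ?_⟩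
    cases b
    · exact absurd hd (List.count_pos_iff.2 hb).ne'
    · rfl
  · rintro rfl
    have hd : (List.replicate u true).count false = 0 := by simp [List.count_replicate]
    refine ⟨fun i => by simp [List.take_replicate, List.count_replicate], by simp, hd, ?_⟩
    have := card_downStepsNotToGround_le (List.replicate u true)
    omega

lemma ncard_eq_ncard_preimage_append_true_add {S : Set (List Bool)} (hS : S.Finite)
    (hnil : [] ∉ S) :
    S.ncard = ((· ++ [true]) ⁻¹' S).ncard + ((· ++ [false]) ⁻¹' S).ncard := by
  have hinj (b : Bool) : Function.Injective (· ++ [b]) := List.append_left_injective [b]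
  have hfin (b : Bool) : ((· ++ [b]) ⁻¹' S).Finite := hS.preimage (hinj b).injOn
  have hdisj : Disjoint ((· ++ [true]) '' ((· ++ [true]) ⁻¹' S))
      ((· ++ [false]) '' ((· ++ [false]) ⁻¹' S)) := by
    rw [Set.disjoint_left]
    rintro _ ⟨t, -, rfl⟩ ⟨t', -, h⟩
    simpa using congrArg List.getLast? h
  have hunion : S = (· ++ [true]) '' ((· ++ [true]) ⁻¹' S) ∪
      (· ++ [false]) '' ((· ++ [false]) ⁻¹' S) := by
    ext w
    rcases List.eq_nil_or_concat' w with rfl | ⟨t, b, rfl⟩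
    · simp [hnil]
    · cases b <;> simp
  nth_rw 1 [hunion]
  rw [Set.ncard_union_eq hdisj ((hfin true).image _) ((hfin false).image _),
    Set.ncard_image_of_injective _ (hinj true), Set.ncard_image_of_injective _ (hinj false)]

lemma ncard_ballotWords_eq_add {u d : ℕ} (j : ℕ) (h : u + d ≠ 0) :
    (ballotWords u d j).ncard = ((· ++ [true]) ⁻¹' ballotWords u d j).ncard +
      ((· ++ [false]) ⁻¹' ballotWords u d j).ncard :=
  ncard_eq_ncard_preimage_append_true_add (ballotWords_finite u d j) fun ⟨_, hu, hd, _⟩ => by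
    simp only [List.count_nil] at hu hd
    omega

lemma preimage_append_true_ballotWords (u d j : ℕ) :
    (· ++ [true]) ⁻¹' ballotWords (u + 1) d j = ballotWords u d j := by
  ext t
  simp [ballotWords, isBallotWord_append_singleton, card_downStepsNotToGround_append_singleton]

lemma preimage_append_false_ballotWords_return (d j : ℕ) :
    (· ++ [false]) ⁻¹' ballotWords (d + 1) (d + 1) j = ballotWords (d + 1) d j := by
  ext t
  simp only [ballotWords, Set.mem_preimage, Set.mem_ofPred_eq, isBallotWord_append_singleton,
    card_downStepsNotToGround_append_singleton, List.count_append, List.count_singleton]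
  grind

lemma preimage_append_false_ballotWords_succ {u d : ℕ} (j : ℕ) (h : d + 1 < u) :
    (· ++ [false]) ⁻¹' ballotWords u (d + 1) (j + 1) = ballotWords u d j := by
  ext t
  simp only [ballotWords, Set.mem_preimage, Set.mem_ofPred_eq, isBallotWord_append_singleton,
    card_downStepsNotToGround_append_singleton, List.count_append, List.count_singleton]
  grind

lemma preimage_append_false_ballotWords_zero {u d : ℕ} (h : d + 1 < u) :
    (· ++ [false]) ⁻¹' ballotWords u (d + 1) 0 = ∅ := by
  ext t
  simp only [ballotWords, Set.mem_preimage, Set.mem_ofPred_eq, isBallotWord_append_singleton,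
    card_downStepsNotToGround_append_singleton, List.count_append, List.count_singleton]
  grind

theorem ncard_ballotWords {a d j : ℕ} (hjd : j ≤ d) (hda : d ≤ a + 1) :
    ((ballotWords (a + 1) d j).ncard : ℤ) = ballotNumber a j := by
  induction hN : a + d using Nat.strong_induction_on generalizing a d j with
  | _ N ih =>
    subst hN
    rcases d with _ | d
    · obtain rfl : j = 0 := by omega
      simp [ballotWords_zero_zero, ballotNumber_zero_right]
    rw [ncard_ballotWords_eq_add j (by omega), preimage_append_true_ballotWords, Nat.cast_add]
    rcases Nat.lt_or_ge d a with hlt | hge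
    · obtain ⟨a, rfl⟩ : ∃ a', a = a' + 1 := ⟨a - 1, by omega⟩
      rw [ih _ (by omega) hjd (by omega) rfl]
      rcases j with _ | j
      · simp [preimage_append_false_ballotWords_zero (show d + 1 < a + 1 + 1 by omega),
          ballotNumber_zero_right]
      · rw [preimage_append_false_ballotWords_succ j (by omega), ih _ (by omega) (by omega)
          (by omega) rfl, ballotNumber_succ_succ]
    · obtain rfl : a = d := by omega
      rw [ballotWords_eq_empty_of_ups_lt j (by omega), preimage_append_false_ballotWords_return,
        Set.ncard_empty, Nat.cast_zero, zero_add]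
      rcases Nat.lt_or_ge j (a + 1) with hj | hj
      · exact ih _ (by omega) (by omega) (by omega) rfl
      · obtain rfl : j = a + 1 := by omega
        rw [ballotWords_eq_empty_of_downs_lt _ (Nat.lt_succ_self a), Set.ncard_empty,
          ballotNumber_self_succ, Nat.cast_zero]

lemma isDyckWord_and_card_upStepsNotAtGround_iff {m k : ℕ} {w : List Bool} :
    IsDyckWord m w ∧ (upStepsNotAtGround w).card = k ↔ w ∈ ballotWords m m k := by
  refine ⟨fun ⟨⟨_, hu, hd, hw⟩, hk⟩ => ⟨hw, hu, hd, ?_⟩,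
    fun ⟨hw, hu, hd, hk⟩ => ⟨⟨?_, hu, hd, hw⟩, ?_⟩⟩
  · rwa [← IsBallotWord.card_upStepsNotAtGround_eq hw (hu.trans hd.symm)]
  · rw [← List.count_true_add_count_false, hu, hd, two_mul]
  · rwa [IsBallotWord.card_upStepsNotAtGround_eq hw (hu.trans hd.symm)]

/-- The number of Dyck words of semi-length `n+1` with exactly `k` up-steps not at ground
level equals `C_{n,k}`. -/
theorem card_dyckWords_upNotGround (n k : ℕ) (hk : k ≤ n) :
    Nat.card {w : List Bool // IsDyckWord (n + 1) w ∧ (upStepsNotAtGround w).card = k}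
      = catalanTriangle n k := by
  have hset : {w | IsDyckWord (n + 1) w ∧ (upStepsNotAtGround w).card = k} =
      ballotWords (n + 1) (n + 1) k :=
    Set.ext fun _ => isDyckWord_and_card_upStepsNotAtGround_iff
  have hcount := ncard_ballotWords (a := n) (d := n + 1) (j := k) (by omega) le_rfl
  rw [← hset, ← catalanTriangle_eq_ballotNumber hk] at hcount
  exact_mod_cast hcount
end

section
/- For all integers 0 ≤ k ≤ n, the number of nondecreasing parking functions of length n+1 containing exactly n−k+1 entries equal to 1 is C_{n,k}. -/
/-- A nondecreasing parking function of length `m`, written as a monotone function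
`a : Fin m → ℕ` of positive integers with `a i ≤ i + 1` (1-based: `a_i ≤ i`). -/
def IsNDParkingFunction (m : ℕ) (a : Fin m → ℕ) : Prop :=
  Monotone a ∧ (∀ i, 1 ≤ a i) ∧ ∀ i : Fin m, a i ≤ (i : ℕ) + 1

/-!
Since a nondecreasing parking function is monotone and positive, its entries equal to `1` form an
initial segment. With `d = n - k`, deleting the `d + 1` leading ones and subtracting `2` from the
remaining entries is a bijection onto the monotone sequences `c : Fin k → ℕ` with `c j ≤ d + j`.
Splitting these according to whether `c 0 = 0` gives a Pascal-type recurrence, solved by the ballot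
numbers `binom(d + 2k, k) - binom(d + 2k, k - 1)`, and `C_{d+k,k}` is this same difference.
-/

open Finset

def boundedMonotoneSeqs (d k : ℕ) : Set (Fin k → ℕ) :=
  {c | Monotone c ∧ ∀ j, c j ≤ d + j}

instance (d k : ℕ) : Finite (boundedMonotoneSeqs d k) :=
  Finite.of_injective
    (fun c j => (⟨c.1 j, by have := c.2.2 j; omega⟩ : Fin (d + k + 1)))
    fun _ _ h => Subtype.ext <| funext fun j => congrArg Fin.val (congrFun h j)

lemma Fin.iff_lt_card_filter_of_antitone {m : ℕ} {p : Fin m → Prop} [DecidablePred p]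
    (hp : Antitone p) (i : Fin m) : p i ↔ (i : ℕ) < #{j | p j} := by
  constructor
  · intro hi
    have hsub : Iic i ⊆ ({j | p j} : Finset (Fin m)) := fun j hj =>
      mem_filter.2 ⟨mem_univ j, hp (mem_Iic.1 hj) hi⟩
    have := card_le_card hsub
    rw [Fin.card_Iic] at this
    omega
  · intro hlt
    by_contra hi
    have hsub : ({j | p j} : Finset (Fin m)) ⊆ Iio i := fun j hj =>
      mem_Iio.2 (lt_of_not_ge fun hij => hi (hp hij (mem_filter.1 hj).2))
    have := card_le_card hsub
    rw [Fin.card_Iio] at this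
    omega

lemma IsNDParkingFunction.eq_one_iff {m : ℕ} {a : Fin m → ℕ} (ha : IsNDParkingFunction m a)
    (i : Fin m) : a i = 1 ↔ (i : ℕ) < #{j | a j = 1} :=
  Fin.iff_lt_card_filter_of_antitone
    (fun i j hij (hj : a j = 1) => le_antisymm (hj ▸ ha.1 hij) (ha.2.1 i)) i

lemma IsNDParkingFunction.eq_append_ones {t k : ℕ} {a : Fin (t + k) → ℕ}
    (ha : IsNDParkingFunction (t + k) a) (hones : #{i | a i = 1} = t) :
    a = Fin.append (fun _ => 1) fun j => a (Fin.natAdd t j) - 2 + 2 := by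
  conv_lhs => rw [← Fin.append_castAdd_natAdd (f := a)]
  congr 1 <;> funext j
  · rw [(ha.eq_one_iff _).2 (by simp [hones])]
  · have hne : ¬a (Fin.natAdd t j) = 1 := by rw [ha.eq_one_iff, hones]; simp
    have := ha.2.1 (Fin.natAdd t j)
    omega

lemma IsNDParkingFunction.tail_sub_two_mem {d k : ℕ} {a : Fin (d + 1 + k) → ℕ}
    (ha : IsNDParkingFunction (d + 1 + k) a) :
    (fun j => a (Fin.natAdd (d + 1) j) - 2) ∈ boundedMonotoneSeqs d k :=
  ⟨fun _ _ hij => Nat.sub_le_sub_right (ha.1 ((Fin.natAdd_le_natAdd_iff _).2 hij)) 2,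
    fun j => by
      have := ha.2.2 (Fin.natAdd (d + 1) j)
      simp only [Fin.val_natAdd] at this
      dsimp only
      omega⟩

lemma isNDParkingFunction_append_ones {d k : ℕ} {c : Fin k → ℕ}
    (hc : c ∈ boundedMonotoneSeqs d k) :
    IsNDParkingFunction (d + 1 + k) (Fin.append (fun _ => 1) fun j => c j + 2) := by
  refine ⟨fun i j hij => ?_, fun i => ?_, fun i => ?_⟩
  · induction i using Fin.addCases <;> induction j using Fin.addCases
    all_goals simp only [Fin.append_left, Fin.append_right]
    · rfl
    · omega
    · rw [Fin.le_def, Fin.val_natAdd, Fin.val_castAdd] at hij; omega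
    · exact Nat.add_le_add_right (hc.1 ((Fin.natAdd_le_natAdd_iff _).1 hij)) 2
  · induction i using Fin.addCases <;> simp
  · induction i using Fin.addCases with
    | left i => simp
    | right j => simp only [Fin.append_right, Fin.val_natAdd]; have := hc.2 j; omega

lemma card_filter_append_ones {t k : ℕ} (c : Fin k → ℕ) :
    #{i | Fin.append (fun _ : Fin t => 1) (fun j => c j + 2) i = 1} = t := by
  rw [card_filter, Fin.sum_univ_add]
  simp

def ndpfWithOnesEquiv (d k : ℕ) :
    {a : Fin (d + 1 + k) → ℕ // IsNDParkingFunction (d + 1 + k) a ∧ #{i | a i = 1} = d + 1} ≃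
      boundedMonotoneSeqs d k where
  toFun a := ⟨_, a.2.1.tail_sub_two_mem⟩
  invFun c := ⟨_, isNDParkingFunction_append_ones c.2, card_filter_append_ones c.1⟩
  left_inv a := Subtype.ext (a.2.1.eq_append_ones a.2.2).symm
  right_inv c := by ext j; simp

lemma card_ndpf_ones_eq_card_boundedMonotoneSeqs {m d k : ℕ} (hm : m = d + 1 + k) :
    Nat.card {a : Fin m → ℕ // IsNDParkingFunction m a ∧ #{i | a i = 1} = d + 1} =
      Nat.card (boundedMonotoneSeqs d k) := by
  subst hm
  exact Nat.card_congr (ndpfWithOnesEquiv d k)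

lemma Fin.monotone_cons {α : Type*} [Preorder α] {n : ℕ} {a : α} {f : Fin n → α} :
    Monotone (Fin.cons a f : Fin (n + 1) → α) ↔ (∀ i, a ≤ f i) ∧ Monotone f := by
  simpa only [monotone_iff_forall_lt, Relator.LiftFun] using Fin.liftFun_cons (· ≤ ·)

def boundedMonotoneSeqs.consZeroEquiv (d k : ℕ) :
    boundedMonotoneSeqs (d + 1) k ≃ {c : boundedMonotoneSeqs d (k + 1) // c.1 0 = 0} where
  toFun c := ⟨⟨Fin.cons 0 c.1, Fin.monotone_cons.2 ⟨fun _ => Nat.zero_le _, c.2.1⟩,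
    Fin.cases (by simp) fun j => by simpa [add_right_comm, add_assoc] using c.2.2 j⟩, rfl⟩
  invFun c := ⟨Fin.tail c.1.1, c.1.2.1.comp (Fin.strictMono_succ.monotone),
    fun j => by simpa [Fin.tail, add_right_comm, add_assoc] using c.1.2.2 j.succ⟩
  left_inv c := by simp
  right_inv c := by
    ext1; ext1
    conv_rhs => rw [← Fin.cons_self_tail c.1.1, c.2]

def boundedMonotoneSeqs.addOneEquiv (d k : ℕ) :
    boundedMonotoneSeqs d (k + 1) ≃ {c : boundedMonotoneSeqs (d + 1) (k + 1) // c.1 0 ≠ 0} where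
  toFun c := ⟨⟨fun j => c.1 j + 1, fun _ _ h => Nat.add_le_add_right (c.2.1 h) 1,
    fun j => by have := c.2.2 j; dsimp only; omega⟩, by simp⟩
  invFun c := ⟨fun j => c.1.1 j - 1, fun _ _ h => Nat.sub_le_sub_right (c.1.2.1 h) 1,
    fun j => by have := c.1.2.2 j; dsimp only; omega⟩
  left_inv c := by ext; simp
  right_inv c := by
    ext j
    have := c.1.2.1 (Fin.zero_le j)
    have := c.2
    simp only
    omega

lemma card_boundedMonotoneSeqs_zero_right (d : ℕ) : Nat.card (boundedMonotoneSeqs d 0) = 1 :=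
  Nat.card_eq_one_iff_unique.2
    ⟨inferInstance, ⟨⟨Fin.elim0, fun i => i.elim0, fun i => i.elim0⟩⟩⟩

lemma card_boundedMonotoneSeqs_zero_succ (k : ℕ) :
    Nat.card (boundedMonotoneSeqs 0 (k + 1)) = Nat.card (boundedMonotoneSeqs 1 k) := by
  have head_eq_zero (c : boundedMonotoneSeqs 0 (k + 1)) : c.1 0 = 0 := by
    simpa using c.2.2 0
  rw [Nat.card_congr (boundedMonotoneSeqs.consZeroEquiv 0 k),
    Nat.card_congr (Equiv.subtypeUnivEquiv head_eq_zero)]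

lemma card_boundedMonotoneSeqs_succ_succ (d k : ℕ) :
    Nat.card (boundedMonotoneSeqs (d + 1) (k + 1)) =
      Nat.card (boundedMonotoneSeqs (d + 2) k) + Nat.card (boundedMonotoneSeqs d (k + 1)) := by
  rw [← Nat.card_congr (Equiv.sumCompl fun c : boundedMonotoneSeqs (d + 1) (k + 1) => c.1 0 = 0),
    Nat.card_sum, Nat.card_congr (boundedMonotoneSeqs.consZeroEquiv (d + 1) k).symm,
    Nat.card_congr (boundedMonotoneSeqs.addOneEquiv d k).symm]

lemma card_boundedMonotoneSeqs_add_choose (d k : ℕ) :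
    Nat.card (boundedMonotoneSeqs d (k + 1)) + (d + 2 * k + 2).choose k =
      (d + 2 * k + 2).choose (k + 1) := by
  induction k generalizing d with
  | zero =>
    induction d with
    | zero => rw [card_boundedMonotoneSeqs_zero_succ, card_boundedMonotoneSeqs_zero_right]; rfl
    | succ d ih =>
      rw [card_boundedMonotoneSeqs_succ_succ, card_boundedMonotoneSeqs_zero_right]
      simp only [mul_zero, add_zero, zero_add, Nat.choose_zero_right, Nat.choose_one_right] at ih ⊢
      omega
  | succ k ihk =>
    induction d with
    | zero =>
      have h := ihk 1
      rw [card_boundedMonotoneSeqs_zero_succ]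
      rw [show 1 + 2 * k + 2 = 2 * k + 3 by ring] at h
      have hsymm : (2 * k + 3).choose (k + 2) = (2 * k + 3).choose (k + 1) :=
        Nat.choose_symm_of_eq_add (by ring)
      rw [show 0 + 2 * (k + 1) + 2 = 2 * k + 3 + 1 by ring, Nat.choose_succ_succ' _ k,
        Nat.choose_succ_succ' _ (k + 1), hsymm]
      omega
    | succ d ihd =>
      have h := ihk (d + 2)
      rw [card_boundedMonotoneSeqs_succ_succ]
      rw [show d + 2 * (k + 1) + 2 = d + 2 + 2 * k + 2 by ring] at ihd
      rw [show d + 1 + 2 * (k + 1) + 2 = d + 2 + 2 * k + 2 + 1 by ring,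
        Nat.choose_succ_succ' _ k, Nat.choose_succ_succ' _ (k + 1)]
      omega

lemma catalanTriangle_zero_right (n : ℕ) : catalanTriangle n 0 = 1 := by
  simp [catalanTriangle]

lemma catalanTriangle_add_choose (d k : ℕ) :
    catalanTriangle (d + k + 1) (k + 1) + (d + 2 * k + 2).choose k =
      (d + 2 * k + 2).choose (k + 1) := by
  have hstep : (d + 2 * k + 2).choose (k + 1) * (k + 1) =
      (d + 2 * k + 2).choose k * (d + k + 2) := by
    rw [Nat.choose_succ_right_eq]; congr 2; omega
  have hle : (d + 2 * k + 2).choose k ≤ (d + 2 * k + 2).choose (k + 1) := by nlinarith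
  have hsymm : (d + k + 1 + (k + 1)).choose (d + k + 1) = (d + 2 * k + 2).choose (k + 1) := by
    rw [Nat.choose_symm_of_eq_add (b := k + 1) rfl]; ring_nf
  have hdiv : (d + 1) * (d + 2 * k + 2).choose (k + 1) =
      ((d + 2 * k + 2).choose (k + 1) - (d + 2 * k + 2).choose k) * (d + k + 1 + 1) := by
    zify [hle] at hstep ⊢
    linear_combination -hstep
  unfold catalanTriangle
  rw [show d + k + 1 - (k + 1) + 1 = d + 1 by omega, hsymm,
    Nat.div_eq_of_eq_mul_left (by omega) hdiv]
  omega

lemma card_boundedMonotoneSeqs (d k : ℕ) :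
    Nat.card (boundedMonotoneSeqs d k) = catalanTriangle (d + k) k := by
  cases k with
  | zero => rw [card_boundedMonotoneSeqs_zero_right, catalanTriangle_zero_right]
  | succ k =>
    have := card_boundedMonotoneSeqs_add_choose d k
    have := catalanTriangle_add_choose d k
    rw [← add_assoc]
    omega

/-- The number of nondecreasing parking functions of length `n+1` containing exactly
`n - k + 1` entries equal to `1` is `C_{n,k}`. -/
theorem card_ndpf_ones (n k : ℕ) (hk : k ≤ n) :
    Nat.card {a : Fin (n + 1) → ℕ // IsNDParkingFunction (n + 1) a ∧
        (Finset.univ.filter fun i : Fin (n + 1) => a i = 1).card = n - k + 1}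
      = catalanTriangle n k := by
  obtain ⟨d, rfl⟩ : ∃ d, n = d + k := ⟨n - k, by omega⟩
  rw [Nat.add_sub_cancel, card_ndpf_ones_eq_card_boundedMonotoneSeqs (d := d) (k := k) (by omega),
    card_boundedMonotoneSeqs]
end
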